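/- arXiv:1709.01310 — 3 statements merged into one kernel-verified Lean document; each statement's English description precedes it below -/
import Mathlib

section
/- Let g̃ : (0,∞) → ℝ be continuously differentiable, suppose there exists M > 0 such that |g̃′| is decreasing on [M,∞) and ∫₁^∞ g̃′(r)² r dr < ∞, and set g(s) = g̃(‖s‖) for s ∈ ℝ²\{0}. Then for every unit vector e ∈ ℝ², the quantity A′_h := ∫_{{‖s‖ > 1}} (g(s + h·e/2) − g(s − h·e/2))² ds satisfies A′_h = O(h²) as h → 0⁺. -/
open MeasureTheory Filter Set Real

noncomputable section

abbrev E2 : Type := EuclideanSpace ℝ (Fin 2)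

/-! By the mean value theorem, `g ‖s + h e/2‖ - g ‖s - h e/2‖` is at most `h` times the supremum
of `|g̃'|` on the window `[‖s‖ - 1/2, ‖s‖ + 1/2]`. Continuity bounds this supremum for `‖s‖` in a
compact range, and monotonicity of `|g̃'|` bounds it by `|g̃'(‖s‖/2)|` beyond. The square of this
radial majorant is integrable on the plane, by polar coordinates and the hypothesis
`∫₁^∞ g̃'(r)² r dr < ∞`, so the integral is `O(h²)` by domination. -/

theorem isBigO_integral_of_norm_le_mul {α ι E F : Type*} [MeasurableSpace α] {μ : Measure α}
    [NormedAddCommGroup E] [NormedSpace ℝ E] [Norm F] {l : Filter ι} {f : ι → α → E}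
    {φ : ι → F} {Φ : α → ℝ} (hΦ : Integrable Φ μ)
    (hf : ∀ᶠ i in l, ∀ᵐ x ∂μ, ‖f i x‖ ≤ ‖φ i‖ * Φ x) :
    (fun i => ∫ x, f i x ∂μ) =O[l] φ := by
  refine Asymptotics.IsBigO.of_bound (∫ x, Φ x ∂μ) ?_
  filter_upwards [hf] with i hi
  calc ‖∫ x, f i x ∂μ‖ ≤ ∫ x, ‖φ i‖ * Φ x ∂μ := norm_integral_le_of_norm_le (hΦ.const_mul _) hi
    _ = (∫ x, Φ x ∂μ) * ‖φ i‖ := by rw [integral_const_mul, mul_comm]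

theorem abs_sub_comp_norm_add_sub_le {E : Type*} [SeminormedAddCommGroup E] {g : ℝ → ℝ} {K : ℝ}
    (s x : E) (hd : ∀ c ∈ Icc (‖s‖ - ‖x‖) (‖s‖ + ‖x‖), DifferentiableAt ℝ g c)
    (hK : ∀ c ∈ Icc (‖s‖ - ‖x‖) (‖s‖ + ‖x‖), |deriv g c| ≤ K) :
    |g ‖s + x‖ - g ‖s - x‖| ≤ K * (2 * ‖x‖) := by
  have mem : ∀ y : E, ‖y‖ = ‖x‖ → ‖s + y‖ ∈ Icc (‖s‖ - ‖x‖) (‖s‖ + ‖x‖) := fun y hy => by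
    have := abs_norm_sub_norm_le (s + y) s
    rw [add_sub_cancel_left, hy] at this
    exact ⟨by linarith [neg_abs_le (‖s + y‖ - ‖s‖)], by linarith [le_abs_self (‖s + y‖ - ‖s‖)]⟩
  have hK0 : 0 ≤ K := (abs_nonneg _).trans
    (hK ‖s‖ ⟨by linarith [norm_nonneg x], by linarith [norm_nonneg x]⟩)
  calc |g ‖s + x‖ - g ‖s - x‖| ≤ K * |‖s + x‖ - ‖s - x‖| :=
        (convex_Icc _ _).norm_image_sub_le_of_norm_deriv_le hd hK
          (by simpa [sub_eq_add_neg] using mem (-x) (norm_neg x)) (mem x rfl)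
    _ ≤ K * ‖x + x‖ := by
        gcongr
        simpa [add_sub_sub_cancel] using abs_norm_sub_norm_le (s + x) (s - x)
    _ ≤ K * (2 * ‖x‖) := by gcongr; linarith [norm_add_le x x]

theorem exists_window_bound_abs_deriv {g : ℝ → ℝ} {M : ℝ}
    (hg : ContinuousOn (deriv g) (Ioi 0))
    (hdec : AntitoneOn (fun x => |deriv g x|) (Ici M))
    (hint : IntegrableOn (fun r => deriv g r ^ 2 * r) (Ioi 1)) :
    ∃ G : ℝ → ℝ, IntegrableOn (fun r => G r ^ 2 * r) (Ioi 0) ∧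
      ∀ r > 1, ∀ c ∈ Icc (r - 1 / 2) (r + 1 / 2), |deriv g c| ≤ G r := by
  -- Beyond `R` the window starts to the right of `r / 2 ≥ M`.
  set R := max (2 * M) 2
  obtain ⟨C, hC⟩ := isCompact_Icc.exists_bound_of_continuousOn
    (hg.mono fun x (hx : x ∈ Icc (1 / 2 : ℝ) (R + 1 / 2)) => by simp only [mem_Ioi]; linarith [hx.1])
  refine ⟨fun r => if r ≤ R then C else |deriv g (2⁻¹ * r)|, ?_, ?_⟩
  · rw [← Ioc_union_Ioi_eq_Ioi (by positivity : (0 : ℝ) ≤ R), integrableOn_union]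
    constructor
    · refine ((by fun_prop : Continuous fun r : ℝ => C ^ 2 * r).integrableOn_Icc (a := 0) (b := R)
        (μ := volume)).mono_set Ioc_subset_Icc_self |>.congr_fun (fun r hr => ?_) measurableSet_Ioc
      simp [if_pos hr.2]
    · have : IntegrableOn (fun r => 2 * (deriv g (2⁻¹ * r) ^ 2 * (2⁻¹ * r))) (Ioi R) :=
        ((integrableOn_Ioi_comp_mul_left_iff _ R (by norm_num)).2
          (hint.mono_set (Ioi_subset_Ioi (by linarith [le_max_right (2 * M) 2])))).const_mul 2
      refine this.congr_fun (fun r (hr : R < r) => ?_) measurableSet_Ioi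
      simp only [if_neg hr.not_ge, sq_abs]
      ring
  · intro r hr c hc
    dsimp only
    split_ifs with hrR
    · simpa using hC c ⟨by linarith [hc.1], by linarith [hc.2]⟩
    · have hRM : M ≤ 2⁻¹ * r := by linarith [le_max_left (2 * M) 2]
      exact hdec hRM (hRM.trans (by linarith [hc.1])) (by linarith [hc.1])

theorem stmt1_general (gt : ℝ → ℝ) (hgt : ContDiffOn ℝ 1 gt (Set.Ioi 0))
    (M : ℝ)
    (hdec : AntitoneOn (fun x : ℝ => |deriv gt x|) (Set.Ici M))
    (hint : IntegrableOn (fun r : ℝ => (deriv gt r) ^ 2 * r) (Set.Ioi (1 : ℝ)))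
    (e : E2) (he : ‖e‖ = 1) :
    (fun h : ℝ => ∫ s in {s : E2 | 1 < ‖s‖},
        (gt ‖s + (h / 2) • e‖ - gt ‖s - (h / 2) • e‖) ^ 2)
      =O[nhdsWithin 0 (Set.Ioi 0)] fun h : ℝ => h ^ 2 := by
  obtain ⟨G, hGint, hG⟩ :=
    exists_window_bound_abs_deriv (hgt.continuousOn_deriv_of_isOpen isOpen_Ioi le_rfl) hdec hint
  have hΦ : Integrable (fun s : E2 => G ‖s‖ ^ 2) := by
    refine (integrable_fun_norm_addHaar volume (f := fun r => G r ^ 2)).2 ?_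
    simpa [finrank_euclideanSpace, mul_comm] using hGint
  refine isBigO_integral_of_norm_le_mul hΦ.integrableOn ?_
  filter_upwards [Ioo_mem_nhdsGT zero_lt_one] with h ⟨h0, h1⟩
  refine (ae_restrict_iff' (measurableSet_lt measurable_const measurable_norm)).2
    (.of_forall fun s (hs : 1 < ‖s‖) => ?_)
  have hx : ‖(h / 2) • e‖ = h / 2 := by rw [norm_smul, he, norm_of_nonneg (by positivity), mul_one]
  have hwin : Icc (‖s‖ - ‖(h / 2) • e‖) (‖s‖ + ‖(h / 2) • e‖) ⊆ Icc (‖s‖ - 1 / 2) (‖s‖ + 1 / 2) :=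
    Icc_subset_Icc (by linarith) (by linarith)
  have hdiff := abs_sub_comp_norm_add_sub_le s ((h / 2) • e)
    (fun c hc => (hgt.differentiableOn one_ne_zero).differentiableAt
      (Ioi_mem_nhds (by linarith [(hwin hc).1])))
    (fun c hc => hG _ hs c (hwin hc))
  calc ‖(gt ‖s + (h / 2) • e‖ - gt ‖s - (h / 2) • e‖) ^ 2‖
      = |gt ‖s + (h / 2) • e‖ - gt ‖s - (h / 2) • e‖| ^ 2 := by simp
    _ ≤ (G ‖s‖ * (2 * ‖(h / 2) • e‖)) ^ 2 := by gcongr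
    _ = ‖h ^ 2‖ * G ‖s‖ ^ 2 := by rw [hx, norm_pow, norm_of_nonneg h0.le]; ring

theorem stmt1 (gt : ℝ → ℝ) (hgt : ContDiffOn ℝ 1 gt (Set.Ioi 0))
    (M : ℝ) (hM : 0 < M)
    (hdec : AntitoneOn (fun x : ℝ => |deriv gt x|) (Set.Ici M))
    (hint : IntegrableOn (fun r : ℝ => (deriv gt r) ^ 2 * r) (Set.Ioi (1 : ℝ)))
    (e : E2) (he : ‖e‖ = 1) :
    (fun h : ℝ => ∫ s in {s : E2 | 1 < ‖s‖},
        (gt ‖s + (h / 2) • e‖ - gt ‖s - (h / 2) • e‖) ^ 2)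
      =O[nhdsWithin 0 (Set.Ioi 0)] fun h : ℝ => h ^ 2 :=
  stmt1_general gt hgt M hdec hint e he
end
end

section
/- For every α ∈ (−1,0) and every unit vector e ∈ ℝ², the integral ∫_{ℝ²} (‖x + e/2‖^α − ‖x − e/2‖^α)² dx is finite. -/
open MeasureTheory Filter Set Real

noncomputable section

/-!
In dimension `d`, write `g(x) = ‖x + v‖ ^ α - ‖x - v‖ ^ α`. Near the two singularities
`g² ≤ 2‖x + v‖ ^ (2α) + 2‖x - v‖ ^ (2α)`, which is locally integrable because `2α > -d`.
Far away the mean value theorem gives `|g(x)| ≲ ‖x‖ ^ (α - 1)`, so `g² ≲ ‖x‖ ^ (2α - 2)`,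
which is integrable at infinity because `2α - 2 < -d`. For `d = 2` both conditions say
`-1 < α < 0`.
-/

open Asymptotics Module

lemma sq_rpow_sub_rpow_le {a b : ℝ} (ha : 0 ≤ a) (hb : 0 ≤ b) (α : ℝ) :
    (a ^ α - b ^ α) ^ 2 ≤ 2 * a ^ (2 * α) + 2 * b ^ (2 * α) := by
  rw [mul_comm 2 α, rpow_mul ha, rpow_mul hb, rpow_two, rpow_two]
  nlinarith [sq_nonneg (a ^ α + b ^ α)]

lemma abs_rpow_sub_rpow_le {α m a b : ℝ} (hα : α ≤ 1) (hm : 0 < m) (ha : m ≤ a) (hb : m ≤ b) :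
    |a ^ α - b ^ α| ≤ |α| * m ^ (α - 1) * |a - b| := by
  have hderiv (x : ℝ) (hx : x ∈ Ici m) :
      HasDerivWithinAt (fun t ↦ t ^ α) (α * x ^ (α - 1)) (Ici m) x :=
    (hasDerivAt_rpow_const (Or.inl (hm.trans_le hx).ne')).hasDerivWithinAt
  have hbound (x : ℝ) (hx : x ∈ Ici m) : ‖α * x ^ (α - 1)‖ ≤ |α| * m ^ (α - 1) := by
    rw [norm_mul, norm_eq_abs, norm_of_nonneg (rpow_nonneg (hm.trans_le hx).le _)]
    exact mul_le_mul_of_nonneg_left (rpow_le_rpow_of_nonpos hm hx (by linarith)) (abs_nonneg α)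
  simpa only [norm_eq_abs] using
    (convex_Ici m).norm_image_sub_le_of_norm_hasDerivWithin_le hderiv hbound hb ha

theorem MeasureTheory.LocallyIntegrable.comp_add_right {G F : Type*} [AddGroup G]
    [TopologicalSpace G] [IsTopologicalAddGroup G] [MeasurableSpace G] [BorelSpace G]
    [NormedAddCommGroup F] {μ : Measure G} [μ.IsAddRightInvariant] {f : G → F}
    (hf : LocallyIntegrable f μ) (v : G) : LocallyIntegrable (fun x ↦ f (x + v)) μ := by
  rw [← map_add_right_eq_self μ v] at hf
  exact (locallyIntegrable_map_homeomorph (Homeomorph.addRight v)).1 hf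

section NormedSpace

variable {E : Type*} [NormedAddCommGroup E] [NormedSpace ℝ E]

lemma isBigO_rpow_add_sub_rpow_sub_cocompact [ProperSpace E] {α : ℝ} (hα : α ≤ 1) (v : E) :
    (fun x : E ↦ ‖x + v‖ ^ α - ‖x - v‖ ^ α) =O[cocompact E] fun x ↦ ‖x‖ ^ (α - 1) := by
  refine IsBigO.of_bound (|α| * 2 ^ (1 - α) * (2 * ‖v‖)) ?_
  filter_upwards [tendsto_norm_cocompact_atTop.eventually_gt_atTop (2 * ‖v‖)] with x hx
  have hx₀ : 0 < ‖x‖ / 2 := by linarith [norm_nonneg v]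
  have hplus : ‖x‖ / 2 ≤ ‖x + v‖ := by linarith [norm_le_add_norm_add x v]
  have hminus : ‖x‖ / 2 ≤ ‖x - v‖ := by linarith [norm_le_insert' x v]
  have hdiff : |‖x + v‖ - ‖x - v‖| ≤ 2 * ‖v‖ := by
    have h := abs_norm_sub_norm_le (x + v) (x - v)
    rwa [show x + v - (x - v) = (2 : ℝ) • v by module, norm_smul, Real.norm_two] at h
  have hhalf : (‖x‖ / 2) ^ (α - 1) = 2 ^ (1 - α) * ‖x‖ ^ (α - 1) := by
    rw [div_rpow (norm_nonneg x) zero_le_two, div_eq_mul_inv, ← rpow_neg zero_le_two, neg_sub,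
      mul_comm]
  rw [norm_eq_abs, norm_of_nonneg (rpow_nonneg (norm_nonneg x) _)]
  calc |‖x + v‖ ^ α - ‖x - v‖ ^ α|
      ≤ |α| * (‖x‖ / 2) ^ (α - 1) * |‖x + v‖ - ‖x - v‖| :=
        abs_rpow_sub_rpow_le hα hx₀ hplus hminus
    _ ≤ |α| * (‖x‖ / 2) ^ (α - 1) * (2 * ‖v‖) := by gcongr
    _ = |α| * 2 ^ (1 - α) * (2 * ‖v‖) * ‖x‖ ^ (α - 1) := by rw [hhalf]; ring

variable [FiniteDimensional ℝ E] [MeasurableSpace E] [BorelSpace E]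
  {μ : Measure E} [μ.IsAddHaarMeasure]

lemma locallyIntegrable_norm_rpow (hd : 1 ≤ finrank ℝ E) {p : ℝ} (hp : -finrank ℝ E < p) :
    LocallyIntegrable (fun x : E ↦ ‖x‖ ^ p) μ :=
  locallyIntegrable_of_norm_le_rpow (C := 1) (α := -p) hd (by linarith)
    (ae_of_all _ fun x ↦ by simp [norm_of_nonneg (rpow_nonneg (norm_nonneg x) p)])
    (measurable_norm.pow_const p).aestronglyMeasurable

lemma integrableAtFilter_cocompact_norm_rpow {p : ℝ} (hp : p < -finrank ℝ E) :
    IntegrableAtFilter (fun x : E ↦ ‖x‖ ^ p) (cocompact E) μ := by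
  have hint : Integrable (fun x : E ↦ (1 + ‖x‖) ^ p) μ := by
    simpa using integrable_one_add_norm (E := E) (μ := μ) (r := -p) (by linarith)
  refine IsBigO.integrableAtFilter ?_
    (measurable_norm.pow_const p).aestronglyMeasurable.stronglyMeasurableAtFilter
    (hint.integrableAtFilter _)
  refine IsBigO.of_bound (2 ^ (-p)) ?_
  filter_upwards [tendsto_norm_cocompact_atTop.eventually_ge_atTop 1] with x hx
  rw [norm_of_nonneg (rpow_nonneg (norm_nonneg x) p), norm_of_nonneg (by positivity)]
  have hp₀ : p ≤ 0 := by linarith [(finrank ℝ E).cast_nonneg (α := ℝ)]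
  calc ‖x‖ ^ p = 2 ^ (-p) * (2 * ‖x‖) ^ p := by
        rw [mul_rpow zero_le_two (norm_nonneg x), ← mul_assoc, ← rpow_add zero_lt_two,
          neg_add_cancel, rpow_zero, one_mul]
    _ ≤ 2 ^ (-p) * (1 + ‖x‖) ^ p :=
        mul_le_mul_of_nonneg_left (rpow_le_rpow_of_nonpos (by linarith) (by linarith) hp₀)
          (by positivity)

lemma locallyIntegrable_sq_rpow_sub_rpow (hd : 1 ≤ finrank ℝ E) {α : ℝ}
    (hα : -finrank ℝ E < 2 * α) (v : E) :
    LocallyIntegrable (fun x : E ↦ (‖x + v‖ ^ α - ‖x - v‖ ^ α) ^ 2) μ := by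
  have h := locallyIntegrable_norm_rpow (μ := μ) hd hα
  refine (((h.comp_add_right v).add (h.comp_add_right (-v))).smul (2 : ℝ)).mono
    (by fun_prop) (ae_of_all _ fun x ↦ ?_)
  simp only [Pi.smul_apply, Pi.add_apply, smul_eq_mul, ← sub_eq_add_neg]
  rw [norm_of_nonneg (sq_nonneg _), norm_of_nonneg (by positivity)]
  linarith [sq_rpow_sub_rpow_le (norm_nonneg (x + v)) (norm_nonneg (x - v)) α]

theorem integrable_sq_rpow_sub_rpow (hd : 1 ≤ finrank ℝ E) {α : ℝ}
    (h₁ : -finrank ℝ E < 2 * α) (h₂ : 2 * α - 2 < -finrank ℝ E) (v : E) :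
    Integrable (fun x : E ↦ (‖x + v‖ ^ α - ‖x - v‖ ^ α) ^ 2) μ := by
  refine integrable_iff_integrableAtFilter_cocompact.2
    ⟨?_, locallyIntegrable_sq_rpow_sub_rpow hd h₁ v⟩
  have hα : α ≤ 1 := by linarith [(finrank ℝ E).cast_nonneg (α := ℝ)]
  have hdecay : (fun x : E ↦ (‖x + v‖ ^ α - ‖x - v‖ ^ α) ^ 2) =O[cocompact E]
      fun x ↦ ‖x‖ ^ (2 * α - 2) := by
    refine ((isBigO_rpow_add_sub_rpow_sub_cocompact hα v).pow 2).congr_right fun x ↦ ?_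
    rw [← rpow_mul_natCast (norm_nonneg x)]
    ring_nf
  have hmeas : Measurable fun x : E ↦ (‖x + v‖ ^ α - ‖x - v‖ ^ α) ^ 2 := by fun_prop
  exact hdecay.integrableAtFilter hmeas.aestronglyMeasurable.stronglyMeasurableAtFilter
    (integrableAtFilter_cocompact_norm_rpow h₂)

end NormedSpace

theorem stmt2_general (α : ℝ) (hα : α ∈ Set.Ioo (-1 : ℝ) 0) (e : E2) :
    MeasureTheory.Integrable (fun x : E2 =>
      (‖x + (1 / 2 : ℝ) • e‖ ^ α - ‖x - (1 / 2 : ℝ) • e‖ ^ α) ^ 2) := by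
  have hd : (finrank ℝ E2 : ℝ) = 2 := by simp
  exact integrable_sq_rpow_sub_rpow (by simp) (by linarith [hα.1]) (by linarith [hα.2]) _

theorem stmt2 (α : ℝ) (hα : α ∈ Set.Ioo (-1 : ℝ) 0) (e : E2) (he : ‖e‖ = 1) :
    MeasureTheory.Integrable (fun x : E2 =>
      (‖x + (1 / 2 : ℝ) • e‖ ^ α - ‖x - (1 / 2 : ℝ) • e‖ ^ α) ^ 2) :=
  stmt2_general α hα e
end
end

section
/- (Lemma 5.1(i).) Let α ∈ ℝ, let L : (0,∞) → (0,∞) be slowly varying at 0, continuously differentiable on (0,∞), bounded away from 0 on every interval (u, √2] with u > 0, and satisfy |L′(x)| ≤ C(1 + x^{−1}) for all x ∈ (0,1] and some C > 0. Then for every j ∈ ℤ²\{(0,0)} and every b_j ∈ □j, lim_{n→∞} ∫_{□j} ( ‖x‖^α · L(‖x‖/n)/L(1/n) − ‖b_j‖^α · L(‖b_j‖/n)/L(1/n) )² dx = ∫_{□j} (‖x‖^α − ‖b_j‖^α)² dx. -/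
open MeasureTheory Filter Set Real

noncomputable section

/-- The closed square of side length `r` centred at `c`. -/
def sqC (c : E2) (r : ℝ) : Set E2 :=
  {x : E2 | |x 0 - c 0| ≤ r / 2 ∧ |x 1 - c 1| ≤ r / 2}

/-- The point of `ℝ²` corresponding to `j ∈ ℤ²`. -/
def jv (j : ℤ × ℤ) : E2 := WithLp.toLp 2 ![(j.1 : ℝ), (j.2 : ℝ)]

/-- `L` is slowly varying at `0`. -/
def SlowlyVaryingAtZero (L : ℝ → ℝ) : Prop :=
  ∀ δ : ℝ, 0 < δ → Tendsto (fun x => L (δ * x) / L x) (nhdsWithin 0 (Set.Ioi 0)) (nhds 1)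

/-!
Karamata's uniform convergence theorem: writing `h t = log L (e⁻ᵗ)`, slow variation says
`h (t + u) - h t → 0` for each `u`, and a Baire category argument upgrades this to uniform
convergence for `u` in compact sets. Hence `L (s / n) / L (1 / n) → 1` uniformly for `s` in
`[1/2, ‖j‖ + 1]`, which contains `‖x‖` for every `x ∈ □j` when `j ≠ 0`. The integrands are
therefore eventually uniformly bounded on the compact square and converge pointwise, so the
integrals converge by dominated convergence.
-/

open Topology Metric

section UniformConvergence

variable {h : ℝ → ℝ}

theorem exists_pos_eventually_abs_add_sub_le (hc : Continuous h)
    (hp : ∀ u, Tendsto (fun x => h (x + u) - h x) atTop (𝓝 0)) {ε : ℝ} (hε : 0 < ε) :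
    ∃ δ > 0, ∀ᶠ x in atTop, ∀ u, |u| < δ → |h (x + u) - h x| ≤ ε := by
  set E : ℕ → Set ℝ := fun n => {u | ∀ x : ℝ, n ≤ x → |h (x + u) - h x| ≤ ε / 2}
  have hE_closed : ∀ n, IsClosed (E n) := fun n => by
    simp only [E, ofPred_forall]
    exact isClosed_iInter fun x => isClosed_iInter fun _ =>
      isClosed_le (by fun_prop) continuous_const
  have hE_cover : ⋃ n, E n = univ := eq_univ_of_forall fun u => by
    have hlim := (hp u).abs
    rw [abs_zero] at hlim
    obtain ⟨X, hX⟩ := eventually_atTop.mp (hlim.eventually_le_const (half_pos hε))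
    exact mem_iUnion.2 ⟨⌈X⌉₊, fun x hx => hX x ((Nat.le_ceil X).trans hx)⟩
  obtain ⟨n, c, hc⟩ := nonempty_interior_of_iUnion_of_closed hE_closed hE_cover
  obtain ⟨δ, hδ, hball⟩ := isOpen_iff.mp isOpen_interior c hc
  refine ⟨δ, hδ, eventually_atTop.2 ⟨n + |c|, fun x hx u hu => ?_⟩⟩
  -- Both `c` and `c + u` lie in `E n`: compare `x = (x - c) + c` and `x + u = (x - c) + (c + u)`
  -- with `x - c`.
  have hxc : (n : ℝ) ≤ x - c := by linarith [le_abs_self c]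
  have h₁ := interior_subset (hball (mem_ball_self hδ)) (x - c) hxc
  have h₂ := interior_subset (hball (a := c + u) (by simpa [Real.dist_eq] using hu)) (x - c) hxc
  rw [sub_add_cancel] at h₁
  rw [show x - c + (c + u) = x + u by ring] at h₂
  calc |h (x + u) - h x| = |(h (x + u) - h (x - c)) - (h x - h (x - c))| := by ring_nf
    _ ≤ ε / 2 + ε / 2 := (abs_sub _ _).trans (add_le_add h₂ h₁)
    _ = ε := add_halves ε

theorem tendstoLocallyUniformly_add_sub (hc : Continuous h)
    (hp : ∀ u, Tendsto (fun x => h (x + u) - h x) atTop (𝓝 0)) :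
    TendstoLocallyUniformly (fun x u => h (x + u) - h x) 0 atTop := by
  rw [Metric.tendstoLocallyUniformly_iff]
  intro ε hε u₀
  obtain ⟨δ, hδ, hsmall⟩ := exists_pos_eventually_abs_add_sub_le hc hp (half_pos hε)
  have hlim := (hp u₀).abs
  rw [abs_zero] at hlim
  refine ⟨ball u₀ δ, ball_mem_nhds u₀ hδ, ?_⟩
  filter_upwards [(tendsto_atTop_add_const_right _ u₀ tendsto_id).eventually hsmall,
    hlim.eventually_lt_const (half_pos hε)] with x h₁ h₂ u hu
  rw [mem_ball, Real.dist_eq] at hu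
  have h₃ := h₁ (u - u₀) hu
  rw [id, add_add_sub_cancel] at h₃
  calc dist (0 : ℝ) (h (x + u) - h x) = |(h (x + u) - h (x + u₀)) + (h (x + u₀) - h x)| := by
        rw [Real.dist_eq, zero_sub, abs_neg, sub_add_sub_cancel]
    _ ≤ ε / 2 + |h (x + u₀) - h x| := (abs_add_le _ _).trans (add_le_add_left h₃ _)
    _ < ε / 2 + ε / 2 := by gcongr
    _ = ε := add_halves ε

end UniformConvergence

namespace SlowlyVaryingAtZero

variable {L : ℝ → ℝ}

theorem tendstoUniformlyOn (hSV : SlowlyVaryingAtZero L) (hpos : ∀ x, 0 < x → 0 < L x)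
    (hL : ContinuousOn L (Ioi 0)) {a b : ℝ} (ha : 0 < a) :
    TendstoUniformlyOn (fun x s => L (s * x) / L x) 1 (𝓝[>] 0) (Icc a b) := by
  set h : ℝ → ℝ := fun t => log (L (exp (-t)))
  have hLexp : ∀ t, L (exp (-t)) ≠ 0 := fun t => (hpos _ (exp_pos _)).ne'
  have hc : Continuous h :=
    continuousOn_log.comp_continuous (hL.comp_continuous (by fun_prop) fun t => exp_pos _) hLexp
  have hlog_ratio : ∀ t u, log (L (exp (-u) * exp (-t)) / L (exp (-t))) = h (t + u) - h t :=
    fun t u => by rw [← exp_add, show -u + -t = -(t + u) by ring, log_div (hLexp _) (hLexp t)]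
  have hp : ∀ u, Tendsto (fun t => h (t + u) - h t) atTop (𝓝 0) := fun u => by
    have hexp : Tendsto (fun t => exp (-t)) atTop (𝓝[>] 0) :=
      tendsto_exp_atBot_nhdsGT.comp tendsto_neg_atTop_atBot
    have := ((continuousAt_log one_ne_zero).tendsto.comp ((hSV _ (exp_pos (-u))).comp hexp))
    rw [log_one] at this
    exact this.congr fun t => hlog_ratio t u
  have hmaps : Icc a b ⊆ (fun s => -log s) ⁻¹' Icc (-log b) (-log a) := fun s hs =>
    ⟨neg_le_neg (log_le_log (ha.trans_le hs.1) hs.2), neg_le_neg (log_le_log ha hs.1)⟩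
  have hU :
      TendstoUniformlyOn (fun x s => h (-log x + -log s) - h (-log x)) 0 (𝓝[>] 0) (Icc a b) :=
    fun U hU => (tendsto_neg_atBot_atTop.comp tendsto_log_nhdsGT_zero).eventually
      ((((tendstoLocallyUniformlyOn_iff_tendstoUniformlyOn_of_compact isCompact_Icc).mp
        (tendstoLocallyUniformly_add_sub hc hp).tendstoLocallyUniformlyOn).comp _).mono hmaps U hU)
  rw [Metric.tendstoUniformlyOn_iff] at hU ⊢
  intro ε hε
  filter_upwards [hU (min 1 (ε / 2)) (by positivity), self_mem_nhdsWithin] with x hx hx0 s hs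
  have hs0 : 0 < s := ha.trans_le hs.1
  specialize hx s hs
  rw [Pi.zero_apply, Real.dist_eq, zero_sub, abs_neg] at hx
  have hratio : L (s * x) / L x = exp (h (-log x + -log s) - h (-log x)) := by
    rw [← hlog_ratio, neg_neg, neg_neg, exp_log hs0, exp_log hx0, exp_log]
    exact div_pos (hpos _ (mul_pos hs0 hx0)) (hpos _ hx0)
  rw [Pi.one_apply, hratio, dist_comm, Real.dist_eq]
  calc _ ≤ 2 * |h (-log x + -log s) - h (-log x)| :=
        abs_exp_sub_one_le (hx.le.trans (min_le_left _ _))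
    _ < 2 * (ε / 2) := by gcongr; exact hx.trans_le (min_le_right _ _)
    _ = ε := by ring

theorem tendstoUniformlyOn_div_natCast (hSV : SlowlyVaryingAtZero L) (hpos : ∀ x, 0 < x → 0 < L x)
    (hL : ContinuousOn L (Ioi 0)) {a b : ℝ} (ha : 0 < a) :
    TendstoUniformlyOn (fun (n : ℕ) s => L (s / n) / L (1 / n)) 1 atTop (Icc a b) := by
  have hinv : Tendsto (fun n : ℕ => 1 / (n : ℝ)) atTop (𝓝[>] 0) :=
    (tendsto_inv_atTop_nhdsGT_zero.comp tendsto_natCast_atTop_atTop).congr fun n => (one_div _).symm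
  simpa only [mul_one_div] using (hSV.tendstoUniformlyOn hpos hL ha).seq_tendstoUniformlyOn _ hinv

end SlowlyVaryingAtZero

theorem sqC_subset_closedBall (c : E2) (r : ℝ) : sqC c r ⊆ closedBall c r := by
  rintro x ⟨h₀, h₁⟩
  have hr : 0 ≤ r := by linarith [abs_nonneg (x 0 - c 0)]
  rw [mem_closedBall, dist_eq_norm, EuclideanSpace.norm_eq, Fin.sum_univ_two, Real.sqrt_le_iff]
  refine ⟨hr, ?_⟩
  simp only [PiLp.sub_apply, Real.norm_eq_abs, sq_abs]
  nlinarith [abs_le.mp h₀, abs_le.mp h₁]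

theorem isCompact_sqC (c : E2) (r : ℝ) : IsCompact (sqC c r) :=
  (isCompact_closedBall c r).of_isClosed_subset
    ((isClosed_le (f := fun x : E2 => |x 0 - c 0|) (by fun_prop) continuous_const).inter
      (isClosed_le (f := fun x : E2 => |x 1 - c 1|) (by fun_prop) continuous_const))
    (sqC_subset_closedBall c r)

theorem one_half_le_norm_of_mem_sqC {j : ℤ × ℤ} (hj : j ≠ 0) {x : E2} (hx : x ∈ sqC (jv j) 1) :
    1 / 2 ≤ ‖x‖ := by
  have hcoord : ∀ (i : Fin 2) (k : ℤ), jv j i = k → k ≠ 0 → |x i - jv j i| ≤ 1 / 2 →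
      1 / 2 ≤ ‖x‖ := by
    intro i k hk hk0 hxi
    have h₁ : (1 : ℝ) ≤ |(k : ℝ)| := by exact_mod_cast Int.one_le_abs hk0
    have h₂ := abs_sub_abs_le_abs_sub (jv j i) (x i)
    have h₃ : |x i| ≤ ‖x‖ := by simpa using PiLp.norm_apply_le x i
    rw [abs_sub_comm] at h₂
    rw [hk] at h₂ hxi
    linarith
  have hj' : j.1 ≠ 0 ∨ j.2 ≠ 0 := by
    contrapose! hj
    exact Prod.ext hj.1 hj.2
  rcases hj' with h | h
  · exact hcoord 0 j.1 rfl h hx.1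
  · exact hcoord 1 j.2 rfl h hx.2

theorem norm_le_of_mem_sqC {c x : E2} {r : ℝ} (hx : x ∈ sqC c r) : ‖x‖ ≤ ‖c‖ + r := by
  have h := sqC_subset_closedBall c r hx
  rw [mem_closedBall, dist_eq_norm] at h
  linarith [norm_le_norm_add_norm_sub' x c]

theorem IsCompact.tendsto_setIntegral_of_bounded {X G ι : Type*} [TopologicalSpace X] [T2Space X]
    [MeasurableSpace X] [OpensMeasurableSpace X] [NormedAddCommGroup G] [NormedSpace ℝ G]
    [SecondCountableTopologyEither X G] {μ : Measure X} [IsFiniteMeasureOnCompacts μ]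
    {l : Filter ι} [l.IsCountablyGenerated]
    {S : Set X} (hS : IsCompact S) {F : ι → X → G} {f : X → G} {B : ℝ}
    (hF : ∀ᶠ n in l, ContinuousOn (F n) S) (hB : ∀ᶠ n in l, ∀ x ∈ S, ‖F n x‖ ≤ B)
    (hlim : ∀ x ∈ S, Tendsto (fun n => F n x) l (𝓝 (f x))) :
    Tendsto (fun n => ∫ x in S, F n x ∂μ) l (𝓝 (∫ x in S, f x ∂μ)) :=
  tendsto_integral_filter_of_dominated_convergence (fun _ => B)
    (hF.mono fun _ hn => hn.aestronglyMeasurable hS.measurableSet)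
    (hB.mono fun _ hn => ae_restrict_of_forall_mem hS.measurableSet hn)
    (integrableOn_const hS.measure_lt_top.ne)
    (ae_restrict_of_forall_mem hS.measurableSet hlim)

theorem sq_mul_sub_mul_le {a b r t K M : ℝ} (ha : |a| ≤ K) (hb : |b| ≤ K) (hr : |r| ≤ M)
    (ht : |t| ≤ M) : (a * r - b * t) ^ 2 ≤ (2 * K * M) ^ 2 := by
  have hK : 0 ≤ K := (abs_nonneg a).trans ha
  have h : |a * r - b * t| ≤ 2 * K * M :=
    calc |a * r - b * t| ≤ |a| * |r| + |b| * |t| := by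
          rw [← abs_mul, ← abs_mul]; exact abs_sub _ _
      _ ≤ K * M + K * M :=
          add_le_add (mul_le_mul ha hr (abs_nonneg _) hK) (mul_le_mul hb ht (abs_nonneg _) hK)
      _ = 2 * K * M := by ring
  exact sq_le_sq' (abs_le.mp h).1 (abs_le.mp h).2

theorem stmt4_general (α : ℝ)
    (L : ℝ → ℝ) (hLpos : ∀ x : ℝ, 0 < x → 0 < L x)
    (hSV : SlowlyVaryingAtZero L)
    (hA1 : ContDiffOn ℝ 1 L (Set.Ioi 0))
    (j : ℤ × ℤ) (hj : j ≠ 0) (bj : E2) (hbj : bj ∈ sqC (jv j) 1) :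
    Tendsto (fun n : ℕ => ∫ x in sqC (jv j) 1,
        (‖x‖ ^ α * (L (‖x‖ / n) / L (1 / n)) - ‖bj‖ ^ α * (L (‖bj‖ / n) / L (1 / n))) ^ 2)
      atTop (nhds (∫ x in sqC (jv j) 1, (‖x‖ ^ α - ‖bj‖ ^ α) ^ 2)) := by
  set S := sqC (jv j) 1
  have hS : IsCompact S := isCompact_sqC _ _
  have hnorm : ∀ x ∈ S, ‖x‖ ∈ Icc (1 / 2) (‖jv j‖ + 1) := fun x hx =>
    ⟨one_half_le_norm_of_mem_sqC hj hx, norm_le_of_mem_sqC hx⟩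
  have hnorm_pos : ∀ x ∈ S, 0 < ‖x‖ := fun x hx => one_half_pos.trans_le (hnorm x hx).1
  have hR :=
    hSV.tendstoUniformlyOn_div_natCast hLpos hA1.continuousOn (b := ‖jv j‖ + 1) one_half_pos
  have hpow : ContinuousOn (fun x : E2 => ‖x‖ ^ α) S :=
    continuous_norm.continuousOn.rpow_const fun x hx => Or.inl (hnorm_pos x hx).ne'
  obtain ⟨K, hK⟩ := hS.exists_bound_of_continuousOn hpow
  refine hS.tendsto_setIntegral_of_bounded (B := (2 * K * 2) ^ 2) ?_ ?_ fun x hx => ?_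
  · filter_upwards [eventually_gt_atTop 0] with n hn
    have hLn : ContinuousOn (fun x : E2 => L (‖x‖ / n)) S :=
      hA1.continuousOn.comp (by fun_prop) fun x hx =>
        div_pos (hnorm_pos x hx) (Nat.cast_pos.2 hn)
    exact ((hpow.mul (hLn.div_const _)).sub continuousOn_const).pow 2
  · filter_upwards [Metric.tendstoUniformlyOn_iff.mp hR 1 one_pos] with n hn x hx
    have hR2 : ∀ y ∈ S, |L (‖y‖ / n) / L (1 / n)| ≤ 2 := fun y hy => by
      have := hn _ (hnorm y hy)
      rw [Pi.one_apply, Real.dist_eq, abs_sub_lt_iff] at this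
      exact abs_le.2 ⟨by linarith, by linarith⟩
    rw [Real.norm_of_nonneg (sq_nonneg _)]
    exact sq_mul_sub_mul_le (hK x hx) (hK bj hbj) (hR2 x hx) (hR2 bj hbj)
  · simpa using ((tendsto_const_nhds.mul (hR.tendsto_at (hnorm x hx))).sub
      (tendsto_const_nhds.mul (hR.tendsto_at (hnorm bj hbj)))).pow 2

theorem stmt4 (α : ℝ)
    (L : ℝ → ℝ) (hLpos : ∀ x : ℝ, 0 < x → 0 < L x)
    (hSV : SlowlyVaryingAtZero L)
    (hA1 : ContDiffOn ℝ 1 L (Set.Ioi 0))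
    (hA1' : ∀ u : ℝ, 0 < u → ∃ ε > (0 : ℝ), ∀ x ∈ Set.Ioc u (Real.sqrt 2), ε ≤ L x)
    (C : ℝ) (hC : 0 < C)
    (hA4 : ∀ x ∈ Set.Ioc (0 : ℝ) 1, |deriv L x| ≤ C * (1 + x⁻¹))
    (j : ℤ × ℤ) (hj : j ≠ 0) (bj : E2) (hbj : bj ∈ sqC (jv j) 1) :
    Tendsto (fun n : ℕ => ∫ x in sqC (jv j) 1,
        (‖x‖ ^ α * (L (‖x‖ / n) / L (1 / n)) - ‖bj‖ ^ α * (L (‖bj‖ / n) / L (1 / n))) ^ 2)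
      atTop (nhds (∫ x in sqC (jv j) 1, (‖x‖ ^ α - ‖bj‖ ^ α) ^ 2)) :=
  stmt4_general α L hLpos hSV hA1 j hj bj hbj
end
end
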